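/- Let u be a matched vertex and let E be an execution of the algorithm MaxMatch. For every configuration C of E that occurs at or after a transition of E in which u executed some rule: if s_u = True in C, then there exists x ∈ single(N(u)) with p_u = x and p_x = u in C. -/

import Mathlib

open Classical

section MaxMatchPreamble

variable {V : Type*} [Fintype V] [LinearOrder V]

/-- Strict comparison on identifiers where `none` (null) counts as greater
than every identifier. -/
def optLT : Option V → Option V → Prop
  | some x, some y => x < y
  | some _, none => True
  | none, _ => False

/-- A configuration of the MaxMatch algorithm: the variables `p`, `α`, `β`
(`a`,`b` here) and the booleans `s`, `end` (`e` here) of every vertex. -/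
structure MMConfig (V : Type*) where
  p : V → Option V
  a : V → Option V
  b : V → Option V
  s : V → Bool
  e : V → Bool

/-- The local state of one vertex. -/
structure MMLocal (V : Type*) where
  p : Option V
  a : Option V
  b : Option V
  s : Bool
  e : Bool

/-- The local state of vertex `u` in configuration `C`. -/
def MMConfig.loc (C : MMConfig V) (u : V) : MMLocal V :=
  ⟨C.p u, C.a u, C.b u, C.s u, C.e u⟩

/-- `m` encodes a maximal matching of `G`: `m u = some v` iff `(u,v)` is a
matching edge, `m u = none` iff `u` is single. -/
structure MaxMatchingOn (G : SimpleGraph V) (m : V → Option V) : Prop where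
  adj : ∀ u v, m u = some v → G.Adj u v
  symm : ∀ u v, m u = some v → m v = some u
  maximal : ∀ u v, G.Adj u v → m u ≠ none ∨ m v ≠ none

/-- `Lowest(S)`: the minimum-identifier element of `S`, `none` if `S = ∅`. -/
noncomputable def lowestSet (S : Set V) : Option V :=
  if h : (Finset.univ.filter fun x => x ∈ S).Nonempty
  then some ((Finset.univ.filter fun x => x ∈ S).min' h) else none

/-- `Lowest` of a finite set of identifiers-or-null: `none` (null) elements are
greater than all identifiers, hence ignored. -/
noncomputable def lowestOpt (S : Finset (Option V)) : Option V :=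
  lowestSet {x : V | some x ∈ S}

/-- Truth value of a proposition. -/
noncomputable def pb (P : Prop) : Bool := if P then true else false

variable (G : SimpleGraph V) (m : V → Option V)

/-- The candidate set considered by `BestRematch(u)`. -/
def candSet (C : MMConfig V) (u : V) : Set V :=
  {x | G.Adj u x ∧ m x = none ∧ (C.p x = some u ∨ C.e x = false)}

/-- `BestRematch(u)`. -/
noncomputable def bestRematch (C : MMConfig V) (u : V) : Option V × Option V :=
  let a := lowestSet (candSet G m C u)
  (a, a.elim none fun w => lowestSet (candSet G m C u \ {w}))

/-- `AskFirst(u)`. -/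
noncomputable def askFirst (C : MMConfig V) (u : V) : Option V :=
  match m u with
  | none => none
  | some v =>
      if C.a u ≠ none ∧ C.a v ≠ none ∧
         2 ≤ ({C.a u, C.b u, C.a v, C.b v} : Finset (Option V)).card ∧
         (optLT (C.a u) (C.a v) ∨ (C.a u = C.a v ∧ C.b u = none) ∨
          (C.a u = C.a v ∧ C.b v ≠ none ∧ u < v))
      then C.a u else none

/-- `AskSecond(u)`. -/
noncomputable def askSecond (C : MMConfig V) (u : V) : Option V :=
  match m u with
  | none => none
  | some v =>
      if askFirst m C v ≠ none
      then lowestOpt (({C.a u, C.b u} : Finset (Option V)) \ {C.a v})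
      else none

/-- `Ask(u)`. -/
noncomputable def ask (C : MMConfig V) (u : V) : Option V :=
  if askFirst m C u = none then askSecond m C u else askFirst m C u

/-- Guard of rule `ResetEnd` (single vertices). -/
def guardResetEnd (C : MMConfig V) (x : V) : Prop :=
  C.p x = none ∧ C.e x = true

/-- Guard of rule `UpdateP` (single vertices). -/
def guardUpdateP (C : MMConfig V) (x : V) : Prop :=
  (C.p x = none ∧ ∃ w, G.Adj x w ∧ m w ≠ none ∧ C.p w = some x) ∨
  (∃ w, C.p x = some w ∧ ¬ (G.Adj x w ∧ m w ≠ none)) ∨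
  (∃ w, C.p x = some w ∧ C.p w ≠ some x)

/-- Guard of rule `UpdateEnd` (single vertices). -/
def guardUpdateEnd (C : MMConfig V) (x : V) : Prop :=
  ∃ w, C.p x = some w ∧ G.Adj x w ∧ m w ≠ none ∧ C.p w = some x ∧ C.e x ≠ C.e w

/-- `o ∈ single(N(u)) ∪ {null}`. -/
def inSNopt (u : V) (o : Option V) : Prop :=
  o = none ∨ ∃ w, o = some w ∧ G.Adj u w ∧ m w = none

/-- First part (first four disjuncts) of the guard of rule `Update`. -/
def guardUpdateA (C : MMConfig V) (u : V) : Prop :=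
  optLT (C.b u) (C.a u) ∨
  (¬ inSNopt G m u (C.a u) ∨ ¬ inSNopt G m u (C.b u)) ∨
  (C.a u = C.b u ∧ C.a u ≠ none) ∨
  ¬ inSNopt G m u (C.p u)

/-- Guard of rule `Update` (matched vertices). -/
def guardUpdate (C : MMConfig V) (u : V) : Prop :=
  guardUpdateA G m C u ∨
  ((C.a u, C.b u) ≠ bestRematch G m C u ∧
    (C.p u = none ∨ ∃ w, C.p u = some w ∧ C.p w ≠ some u ∧ C.e w = true))

/-- `p_{p_u} = u`. -/
def ppEq (C : MMConfig V) (u : V) : Prop :=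
  ∃ w, C.p u = some w ∧ C.p w = some u

/-- Value assigned to `s_u` by `MatchFirst` (`v = m_u`). -/
def mfS (C : MMConfig V) (u v : V) : Prop :=
  C.p u = askFirst m C u ∧ ppEq C u ∧ (C.p v = askSecond m C v ∨ C.p v = none)

/-- Value assigned to `end_u` by `MatchFirst` (`v = m_u`). -/
def mfE (C : MMConfig V) (u v : V) : Prop :=
  C.p u = askFirst m C u ∧ ppEq C u ∧ C.s u = true ∧
  C.p v = askSecond m C v ∧ C.e v = true

/-- Guard of rule `MatchFirst` (matched vertices). -/
def guardMatchFirst (C : MMConfig V) (u : V) : Prop :=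
  askFirst m C u ≠ none ∧ ∃ v, m u = some v ∧
    (C.p u ≠ askFirst m C u ∨ ¬ (C.s u = true ↔ mfS m C u v) ∨
     ¬ (C.e u = true ↔ mfE m C u v))

/-- Value assigned to `end_u` (and then `s_u`) by `MatchSecond` (`v = m_u`). -/
def msE (C : MMConfig V) (u v : V) : Prop :=
  C.p u = askSecond m C u ∧ ppEq C u ∧ C.p v = askFirst m C v

/-- Guard of rule `MatchSecond` (matched vertices). -/
def guardMatchSecond (C : MMConfig V) (u : V) : Prop :=
  askSecond m C u ≠ none ∧ ∃ v, m u = some v ∧ C.s v = true ∧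
    (C.p u ≠ askSecond m C u ∨ ¬ (C.e u = true ↔ msE m C u v) ∨ C.s u ≠ C.e u)

/-- Guard of rule `ResetMatch` (matched vertices). -/
def guardResetMatch (C : MMConfig V) (u : V) : Prop :=
  (askFirst m C u = none ∧ askSecond m C u = none ∧
    ¬ (C.p u = none ∧ C.s u = false ∧ C.e u = false)) ∨
  (askSecond m C u ≠ none ∧ C.p u ≠ none ∧ ∃ v, m u = some v ∧ C.s v = false)

/-- The local state of `u` after it atomically executes the command of its
highest-priority true-guard rule (its state is unchanged if no guard holds). -/
noncomputable def localNext (C : MMConfig V) (u : V) : MMLocal V :=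
  if m u = none then
    if guardResetEnd C u then ⟨C.p u, C.a u, C.b u, C.s u, false⟩
    else if guardUpdateP G m C u then
      ⟨lowestSet {w | G.Adj u w ∧ C.p w = some u}, C.a u, C.b u, C.s u, false⟩
    else if guardUpdateEnd G m C u then
      ⟨C.p u, C.a u, C.b u, C.s u, (C.p u).elim (C.e u) C.e⟩
    else C.loc u
  else
    if guardUpdate G m C u then
      ⟨none, (bestRematch G m C u).1, (bestRematch G m C u).2, false, false⟩
    else if guardMatchFirst m C u then
      ⟨askFirst m C u, C.a u, C.b u,
        pb (∃ v, m u = some v ∧ mfS m C u v),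
        pb (∃ v, m u = some v ∧ mfE m C u v)⟩
    else if guardMatchSecond m C u then
      ⟨askSecond m C u, C.a u, C.b u,
        pb (∃ v, m u = some v ∧ msE m C u v),
        pb (∃ v, m u = some v ∧ msE m C u v)⟩
    else if guardResetMatch m C u then ⟨none, C.a u, C.b u, false, false⟩
    else C.loc u

/-- `u` is activable (eligible for some rule) in `C`. -/
def Activable (C : MMConfig V) (u : V) : Prop :=
  (m u = none ∧ (guardResetEnd C u ∨ guardUpdateP G m C u ∨ guardUpdateEnd G m C u)) ∨
  (m u ≠ none ∧ (guardUpdate G m C u ∨ guardMatchFirst m C u ∨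
    guardMatchSecond m C u ∨ guardResetMatch m C u))

/-- A configuration is stable when no vertex is activable. -/
def Stable (C : MMConfig V) : Prop := ∀ u, ¬ Activable G m C u

/-- One transition of the adversarial distributed daemon: the nonempty set `A`
of activable vertices simultaneously execute their (highest-priority) rules. -/
def StepOn (C C' : MMConfig V) (A : Set V) : Prop :=
  A.Nonempty ∧ (∀ u ∈ A, Activable G m C u) ∧
  (∀ u ∈ A, C'.loc u = localNext G m C u) ∧
  (∀ u, u ∉ A → C'.loc u = C.loc u)

/-- A (maximal) execution, padded with stuttering once a stable configuration is
reached: at each index either a genuine transition occurs, or the configuration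
is stable and nothing moves.  `u ∈ act i` means `u` makes a move in transition
`i ↦ i+1`. -/
structure MMExecution (G : SimpleGraph V) (m : V → Option V) where
  cfg : ℕ → MMConfig V
  act : ℕ → Set V
  valid : ∀ i, StepOn G m (cfg i) (cfg (i+1)) (act i) ∨
    (act i = ∅ ∧ Stable G m (cfg i) ∧ cfg (i+1) = cfg i)

/-- μ: the number of matched vertices. -/
noncomputable def muV : ℕ := (Finset.univ.filter fun u : V => m u ≠ none).card

/-- σ: the number of single vertices. -/
noncomputable def sigmaV : ℕ := (Finset.univ.filter fun u : V => m u = none).card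

/-- The matching `M` as a relation. -/
def Mrel (a b : V) : Prop := m a = some b

/-- The output edge set `M⁺` of a configuration, as a relation. -/
def Mplus (C : MMConfig V) (a b : V) : Prop :=
  (m a = some b ∧ C.p a = none ∧ C.p b = none) ∨
  (G.Adj a b ∧ m a ≠ some b ∧ C.p a = some b ∧ C.p b = some a)

/-- `(x,u,v,y)` is a 3-augmenting path on `(G, M')`. -/
def IsAug3 (M' : V → V → Prop) (x u v y : V) : Prop :=
  x ≠ u ∧ x ≠ v ∧ x ≠ y ∧ u ≠ v ∧ u ≠ y ∧ v ≠ y ∧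
  G.Adj x u ∧ G.Adj u v ∧ G.Adj v y ∧
  M' u v ∧ ¬ M' x u ∧ ¬ M' v y

end MaxMatchPreamble

/-!
A matched vertex `u` can only set `s_u` by a match rule, and that rule sets it only when `p_u`
already is the requested vertex `x ∈ {α_u, β_u}` and `p_x = u`; since `Update` has priority and is
disabled, `α_u` and `β_u` are single neighbours of `u`. Once `u` and a single `x` point to each
other, `UpdateP` is disabled at `x`, so `p_x` stays put; and while `u` does not move, `p_u` and
`s_u` do not change either. Hence the property survives every later transition.
-/

section MutualSingle

variable {V : Type*} [LinearOrder V] {G : SimpleGraph V} {m : V → Option V}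

variable (G m) in
def MutualSingle (C : MMConfig V) (u : V) : Prop :=
  ∃ x, G.Adj u x ∧ m x = none ∧ C.p u = some x ∧ C.p x = some u

lemma askFirst_eq_some {C : MMConfig V} {u w : V} (h : askFirst m C u = some w) :
    C.a u = some w := by
  unfold askFirst at h
  split at h
  · cases h
  · split_ifs at h
    exact h

lemma pb_eq_true {P : Prop} : pb P = true ↔ P := by
  simp [pb]

variable [Fintype V]

lemma lowestSet_mem {S : Set V} {w : V} (h : lowestSet S = some w) : w ∈ S := by
  unfold lowestSet at h
  split_ifs at h with hne
  cases h
  simpa using Finset.min'_mem _ hne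

lemma askSecond_eq_some {C : MMConfig V} {u w : V} (h : askSecond m C u = some w) :
    C.a u = some w ∨ C.b u = some w := by
  unfold askSecond lowestOpt at h
  split at h
  · cases h
  · split_ifs at h
    have hmem := lowestSet_mem h
    simp only [Set.mem_ofPred_eq, Finset.mem_sdiff, Finset.mem_insert,
      Finset.mem_singleton] at hmem
    exact hmem.1.imp Eq.symm Eq.symm

lemma adj_single_of_not_guardUpdate {C : MMConfig V} {u w : V}
    (hg : ¬ guardUpdate G m C u) (hw : C.a u = some w ∨ C.b u = some w) :
    G.Adj u w ∧ m w = none := by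
  have hin : inSNopt G m u (some w) := by
    by_contra hcon
    rcases hw with hw | hw <;> rw [← hw] at hcon
    · exact hg (.inl (.inr (.inl (.inl hcon))))
    · exact hg (.inl (.inr (.inl (.inr hcon))))
  obtain h | ⟨_, hw', hadj, hmw⟩ := hin
  · cases h
  · cases hw'
    exact ⟨hadj, hmw⟩

lemma localNext_s_eq_true {C : MMConfig V} {u : V} (hmu : m u ≠ none)
    (hact : Activable G m C u) (hs : (localNext G m C u).s = true) :
    ∃ x, G.Adj u x ∧ m x = none ∧ C.p u = some x ∧ C.p x = some u ∧
      (localNext G m C u).p = some x := by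
  unfold localNext at hs ⊢
  rw [if_neg hmu] at hs ⊢
  by_cases gUpdate : guardUpdate G m C u
  · rw [if_pos gUpdate] at hs
    cases hs
  rw [if_neg gUpdate] at hs ⊢
  by_cases gFirst : guardMatchFirst m C u
  · rw [if_pos gFirst] at hs ⊢
    obtain ⟨v, -, hask, ⟨x, hpu, hpx⟩, -⟩ := pb_eq_true.mp hs
    have hx : askFirst m C u = some x := hask ▸ hpu
    obtain ⟨hadj, hmx⟩ := adj_single_of_not_guardUpdate gUpdate (.inl (askFirst_eq_some hx))
    exact ⟨x, hadj, hmx, hpu, hpx, hx⟩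
  rw [if_neg gFirst] at hs ⊢
  by_cases gSecond : guardMatchSecond m C u
  · rw [if_pos gSecond] at hs ⊢
    obtain ⟨v, -, hask, ⟨x, hpu, hpx⟩, -⟩ := pb_eq_true.mp hs
    have hx : askSecond m C u = some x := hask ▸ hpu
    obtain ⟨hadj, hmx⟩ := adj_single_of_not_guardUpdate gUpdate (askSecond_eq_some hx)
    exact ⟨x, hadj, hmx, hpu, hpx, hx⟩
  rw [if_neg gSecond] at hs ⊢
  by_cases gReset : guardResetMatch m C u
  · rw [if_pos gReset] at hs
    cases hs
  rcases hact with ⟨hnone, -⟩ | ⟨-, hg | hg | hg | hg⟩ <;> contradiction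

variable {C C' : MMConfig V} {A : Set V} {u : V}

lemma StepOn.p_of_mem (hstep : StepOn G m C C' A) (hu : u ∈ A) :
    C'.p u = (localNext G m C u).p :=
  congrArg MMLocal.p (hstep.2.2.1 u hu)

lemma StepOn.s_of_mem (hstep : StepOn G m C C' A) (hu : u ∈ A) :
    C'.s u = (localNext G m C u).s :=
  congrArg MMLocal.s (hstep.2.2.1 u hu)

lemma StepOn.p_of_not_mem (hstep : StepOn G m C C' A) (hu : u ∉ A) : C'.p u = C.p u :=
  congrArg MMLocal.p (hstep.2.2.2 u hu)

lemma StepOn.s_of_not_mem (hstep : StepOn G m C C' A) (hu : u ∉ A) : C'.s u = C.s u :=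
  congrArg MMLocal.s (hstep.2.2.2 u hu)

lemma StepOn.p_single_of_mutual (hstep : StepOn G m C C' A) {x : V} (hmu : m u ≠ none)
    (hadj : G.Adj u x) (hmx : m x = none) (hpu : C.p u = some x) (hpx : C.p x = some u) :
    C'.p x = some u := by
  by_cases hxA : x ∈ A
  · have hUpdateP : ¬ guardUpdateP G m C x := by
      rintro (⟨hnone, -⟩ | ⟨w, hw, hbad⟩ | ⟨w, hw, hback⟩) <;> simp_all [hadj.symm]
    rw [hstep.p_of_mem hxA]
    unfold localNext
    split_ifs <;> assumption
  · exact (hstep.p_of_not_mem hxA).trans hpx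

lemma StepOn.mutualSingle_of_s (hstep : StepOn G m C C' A) (hmu : m u ≠ none)
    (h : u ∈ A ∨ (C.s u = true → MutualSingle G m C u)) (hs : C'.s u = true) :
    MutualSingle G m C' u := by
  by_cases huA : u ∈ A
  · obtain ⟨x, hadj, hmx, hpu, hpx, hpu'⟩ :=
      localNext_s_eq_true hmu (hstep.2.1 u huA) ((hstep.s_of_mem huA).symm.trans hs)
    exact ⟨x, hadj, hmx, (hstep.p_of_mem huA).trans hpu',
      hstep.p_single_of_mutual hmu hadj hmx hpu hpx⟩
  · obtain ⟨x, hadj, hmx, hpu, hpx⟩ :=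
      h.resolve_left huA ((hstep.s_of_not_mem huA).symm.trans hs)
    exact ⟨x, hadj, hmx, (hstep.p_of_not_mem huA).trans hpu,
      hstep.p_single_of_mutual hmu hadj hmx hpu hpx⟩

lemma MMExecution.mutualSingle_of_s_succ (E : MMExecution G m) {u : V} (hmu : m u ≠ none)
    {n : ℕ} (h : u ∈ E.act n ∨ ((E.cfg n).s u = true → MutualSingle G m (E.cfg n) u)) :
    (E.cfg (n + 1)).s u = true → MutualSingle G m (E.cfg (n + 1)) u := by
  rcases E.valid n with hstep | ⟨hempty, -, hcfg⟩
  · exact hstep.mutualSingle_of_s hmu h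
  · rw [hcfg]
    exact h.resolve_left (by simp [hempty])

end MutualSingle

theorem stmt15_general {V : Type*} [Fintype V] [LinearOrder V]
    (G : SimpleGraph V) (m : V → Option V)
    (E : MMExecution G m) (u : V) (hu : m u ≠ none) (j : ℕ)
    (h : ∃ i, i < j ∧ u ∈ E.act i)
    (hs : (E.cfg j).s u = true) :
    ∃ x : V, G.Adj u x ∧ m x = none ∧
      (E.cfg j).p u = some x ∧ (E.cfg j).p x = some u := by
  obtain ⟨i, hij, hact⟩ := h
  induction j, hij using Nat.le_induction with
  | base => exact E.mutualSingle_of_s_succ hu (.inl hact) hs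
  | succ n _ ih => exact E.mutualSingle_of_s_succ hu (.inr ih) hs

/-- After a matched vertex `u` has executed some rule, `s_u = True` implies
that `u` points to a single neighbor that points back to `u`. -/
theorem stmt15 {V : Type*} [Fintype V] [LinearOrder V]
    (G : SimpleGraph V) (m : V → Option V) (hm : MaxMatchingOn G m)
    (E : MMExecution G m) (u : V) (hu : m u ≠ none) (j : ℕ)
    (h : ∃ i, i < j ∧ u ∈ E.act i)
    (hs : (E.cfg j).s u = true) :
    ∃ x : V, G.Adj u x ∧ m x = none ∧
      (E.cfg j).p u = some x ∧ (E.cfg j).p x = some u :=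
  stmt15_general G m E u hu j h hs
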